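/- arXiv:math/0212069 — 3 statements merged into one kernel-verified Lean document; each statement's English description precedes it below -/
import Mathlib

section
/- Let λ ∈ (0,1), M > 0, and let f : (0,∞) → (0,∞) be non-increasing, log-convex, and satisfy f(τ) ≤ M τ^{-λ} for all τ > 0. Fix t > 0 and α ∈ (0, 1/2], and set δ := f(t) t^{λ} / M ∈ (0,1]. Then ∫₀^∞ e^{-s} f(ts) ds ≤ M t^{-λ} ( ∫₀¹ (αs)^{-λ} δ^{p(s)} ds + e^{-1} δ ), where p(s) := s(1-α)/(1-αs). -/
open MeasureTheory Set Real

/-! On `(0, 1]` the point `ts` is the convex combination `(1 - p(s)) · αts + p(s) · t`, so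
log-convexity bounds `f(ts)` by `f(αts)^{1-p(s)} f(t)^{p(s)}`; both factors are at most
`M(αts)^{-λ}`, the second one up to the factor `δ`, because `f(t) = M t^{-λ} δ` and
`τ ↦ M τ^{-λ}` is non-increasing. On `(1, ∞)` monotonicity gives `f(ts) ≤ f(t)`, and
`∫₁^∞ e^{-s} ds = e^{-1}`. -/

theorem le_rpow_mul_rpow_of_convexOn_log {E : Type*} [AddCommGroup E] [Module ℝ E]
    {S : Set E} {f : E → ℝ} (hf : ConvexOn ℝ S fun x => log (f x))
    (hf_pos : ∀ x ∈ S, 0 < f x) {x y : E} (hx : x ∈ S) (hy : y ∈ S) {a b : ℝ}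
    (ha : 0 ≤ a) (hb : 0 ≤ b) (hab : a + b = 1) :
    f (a • x + b • y) ≤ f x ^ a * f y ^ b := by
  have hmem : a • x + b • y ∈ S := hf.1 hx hy ha hb hab
  rw [← exp_log (hf_pos _ hmem), rpow_def_of_pos (hf_pos x hx), rpow_def_of_pos (hf_pos y hy),
    ← exp_add, exp_le_exp, mul_comm (log (f x)), mul_comm (log (f y))]
  exact hf.2 hx hy ha hb hab

theorem rpow_mul_rpow_le_mul_rpow {x y A δ p : ℝ} (hx0 : 0 ≤ x) (hxA : x ≤ A) (hy0 : 0 ≤ y)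
    (hyA : y ≤ A * δ) (hδ : 0 ≤ δ) (hp0 : 0 ≤ p) (hp1 : p ≤ 1) :
    x ^ (1 - p) * y ^ p ≤ A * δ ^ p := by
  have hA : 0 ≤ A := hx0.trans hxA
  calc x ^ (1 - p) * y ^ p ≤ A ^ (1 - p) * (A * δ) ^ p := by
        gcongr
    _ = A * δ ^ p := by
        rw [mul_rpow hA hδ, ← mul_assoc, ← rpow_add' hA (by norm_num), sub_add_cancel, rpow_one]

/-- The exponent `p(s) = s(1-α)/(1-αs)`, chosen so that `s = (1 - p(s)) · αs + p(s)`. -/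
noncomputable def daviesExponent (α s : ℝ) : ℝ := s * (1 - α) / (1 - α * s)

section daviesExponent

variable {α s : ℝ}

theorem daviesExponent_nonneg (hα0 : 0 ≤ α) (hα : α < 1) (hs0 : 0 ≤ s) (hs1 : s ≤ 1) :
    0 ≤ daviesExponent α s := by
  unfold daviesExponent
  have := mul_lt_one_of_nonneg_of_lt_one_left hα0 hα hs1
  exact div_nonneg (mul_nonneg hs0 (by linarith)) (by linarith)

theorem daviesExponent_le_one (hα0 : 0 ≤ α) (hα : α < 1) (hs1 : s ≤ 1) :
    daviesExponent α s ≤ 1 := by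
  unfold daviesExponent
  have := mul_lt_one_of_nonneg_of_lt_one_left hα0 hα hs1
  rw [div_le_one (by linarith)]
  nlinarith

theorem one_sub_daviesExponent_mul_add (hαs : α * s ≠ 1) (t : ℝ) :
    (1 - daviesExponent α s) * (α * t * s) + daviesExponent α s * t = t * s := by
  unfold daviesExponent
  linear_combination (s * (1 - α) * t) * mul_inv_cancel₀ (sub_ne_zero.mpr hαs.symm)

theorem measurable_rpow_daviesExponent (δ : ℝ) :
    Measurable fun s => δ ^ daviesExponent α s := by
  unfold daviesExponent
  fun_prop

end daviesExponent

theorem apply_mul_le_of_convexOn_log_of_le_rpow {f : ℝ → ℝ} {lam M : ℝ}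
    (hf_pos : ∀ τ ∈ Ioi (0 : ℝ), 0 < f τ)
    (hf_logconvex : ConvexOn ℝ (Ioi 0) fun τ => log (f τ))
    (hf_bound : ∀ τ ∈ Ioi (0 : ℝ), f τ ≤ M * τ ^ (-lam)) (hlam : 0 ≤ lam)
    {t α δ s : ℝ} (ht : 0 < t) (hα0 : 0 < α) (hα1 : α < 1) (hft : f t = M * t ^ (-lam) * δ)
    (hs0 : 0 < s) (hs1 : s ≤ 1) :
    f (t * s) ≤ M * t ^ (-lam) * ((α * s) ^ (-lam) * δ ^ daviesExponent α s) := by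
  have hαts : α * t * s ∈ Ioi (0 : ℝ) := mem_Ioi.mpr (by positivity)
  have hδ : 0 ≤ δ := by
    refine (pos_of_mul_pos_right (hft ▸ hf_pos t ht) ?_).le
    exact (hf_pos t ht).le.trans (hf_bound t ht)
  have hαs := mul_lt_one_of_nonneg_of_lt_one_left hα0.le hα1 hs1
  have hp0 := daviesExponent_nonneg hα0.le hα1 hs0.le hs1
  have hp1 := daviesExponent_le_one hα0.le hα1 hs1
  have h_interp :
      f (t * s) ≤ f (α * t * s) ^ (1 - daviesExponent α s) * f t ^ daviesExponent α s := by
    have := le_rpow_mul_rpow_of_convexOn_log hf_logconvex hf_pos hαts (show t ∈ Ioi 0 from ht)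
      (sub_nonneg.mpr hp1) hp0 (sub_add_cancel _ _)
    rwa [smul_eq_mul, smul_eq_mul, one_sub_daviesExponent_mul_add hαs.ne] at this
  have h_mono : M * t ^ (-lam) ≤ M * (α * t * s) ^ (-lam) := by
    have hM : 0 ≤ M := nonneg_of_mul_nonneg_left ((hf_pos t ht).le.trans (hf_bound t ht))
      (rpow_pos_of_pos ht _)
    refine mul_le_mul_of_nonneg_left (rpow_le_rpow_of_nonpos hαts ?_ (by linarith)) hM
    nlinarith
  calc f (t * s) ≤ M * (α * t * s) ^ (-lam) * δ ^ daviesExponent α s :=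
        h_interp.trans <| rpow_mul_rpow_le_mul_rpow (hf_pos _ hαts).le (hf_bound _ hαts)
          (hf_pos t ht).le (hft ▸ mul_le_mul_of_nonneg_right h_mono hδ) hδ hp0 hp1
    _ = M * t ^ (-lam) * ((α * s) ^ (-lam) * δ ^ daviesExponent α s) := by
        rw [show α * t * s = t * (α * s) by ring, mul_rpow ht.le (by positivity)]
        ring

theorem integrableOn_rpow_neg_mul_rpow_daviesExponent {lam α δ : ℝ} (hlam : lam < 1)
    (hα0 : 0 ≤ α) (hα1 : α < 1) (hδ0 : 0 ≤ δ) (hδ1 : δ ≤ 1) :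
    IntegrableOn (fun s => (α * s) ^ (-lam) * δ ^ daviesExponent α s) (Ioc 0 1) := by
  have h_rpow : IntegrableOn (fun s : ℝ => (α * s) ^ (-lam)) (Ioc 0 1) := by
    have h := (intervalIntegral.intervalIntegrable_rpow' (a := 0) (b := 1) (r := -lam)
      (by linarith)).1
    refine IntegrableOn.congr_fun (h.const_mul (α ^ (-lam))) (fun s hs => ?_) measurableSet_Ioc
    exact (mul_rpow hα0 hs.1.le).symm
  refine h_rpow.mul_bdd (c := 1) (measurable_rpow_daviesExponent δ).aestronglyMeasurable ?_
  filter_upwards [ae_restrict_mem measurableSet_Ioc] with s hs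
  have hp0 := daviesExponent_nonneg hα0 hα1 hs.1.le hs.2
  rw [norm_of_nonneg (rpow_nonneg hδ0 _)]
  exact rpow_le_one hδ0 hδ1 hp0

theorem setIntegral_Ioi_le_add_of_le {f φ ψ : ℝ → ℝ} {a b : ℝ} (hab : a ≤ b)
    (hf : ∀ x ∈ Ioi a, 0 ≤ f x) (hφ : IntegrableOn φ (Ioc a b)) (hψ : IntegrableOn ψ (Ioi b))
    (hfφ : ∀ x ∈ Ioc a b, f x ≤ φ x) (hfψ : ∀ x ∈ Ioi b, f x ≤ ψ x) :
    ∫ x in Ioi a, f x ≤ (∫ x in Ioc a b, φ x) + ∫ x in Ioi b, ψ x := by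
  have hφ' := (hφ.integrable_indicator measurableSet_Ioc).restrict (s := Ioi a)
  have hψ' := (hψ.integrable_indicator measurableSet_Ioi).restrict (s := Ioi a)
  calc ∫ x in Ioi a, f x ≤ ∫ x in Ioi a, ((Ioc a b).indicator φ x + (Ioi b).indicator ψ x) := by
        refine integral_mono_of_nonneg (ae_restrict_of_forall_mem measurableSet_Ioi hf)
          (hφ'.add hψ') (ae_restrict_of_forall_mem measurableSet_Ioi fun x hx => ?_)
        rcases le_or_gt x b with hxb | hxb
        · simp [indicator_of_mem (show x ∈ Ioc a b from ⟨hx, hxb⟩), hxb, hfφ x ⟨hx, hxb⟩]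
        · simp [indicator_of_mem (show x ∈ Ioi b from hxb), hxb.not_ge, hfψ x hxb]
    _ = (∫ x in Ioc a b, φ x) + ∫ x in Ioi b, ψ x := by
        rw [integral_add hφ' hψ', setIntegral_indicator measurableSet_Ioc,
          setIntegral_indicator measurableSet_Ioi, inter_eq_right.mpr Ioc_subset_Ioi_self,
          inter_eq_right.mpr (Ioi_subset_Ioi hab)]

/-- Abstract form of Davies' Green's function upper bound: if `f : (0,∞) → (0,∞)` is
non-increasing, log-convex and satisfies `f τ ≤ M τ^(-λ)`, then with
`δ = f t * t^λ / M` and `p(s) = s(1-α)/(1-αs)` one has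
`∫₀^∞ e^(-s) f(ts) ds ≤ M t^(-λ) (∫₀¹ (αs)^(-λ) δ^(p s) ds + e⁻¹ δ)`. -/
theorem davies_green_function_bound (f : ℝ → ℝ) (lam M : ℝ)
    (hlam0 : 0 < lam) (hlam1 : lam < 1) (hM : 0 < M)
    (hf_pos : ∀ τ ∈ Set.Ioi (0 : ℝ), 0 < f τ)
    (hf_anti : AntitoneOn f (Set.Ioi (0 : ℝ)))
    (hf_logconvex : ConvexOn ℝ (Set.Ioi (0 : ℝ)) (fun τ => Real.log (f τ)))
    (hf_bound : ∀ τ ∈ Set.Ioi (0 : ℝ), f τ ≤ M * τ ^ (-lam))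
    (t α δ : ℝ) (ht : 0 < t) (hα0 : 0 < α) (hα : α ≤ 1 / 2)
    (hδ : δ = f t * t ^ lam / M) :
    ∫ s in Set.Ioi (0 : ℝ), Real.exp (-s) * f (t * s) ≤
      M * t ^ (-lam) *
        ((∫ s in (0 : ℝ)..1, (α * s) ^ (-lam) * δ ^ (s * (1 - α) / (1 - α * s))) +
          Real.exp (-1) * δ) := by
  have hα1 : α < 1 := by linarith
  have hMt : 0 < M * t ^ (-lam) := by positivity
  have hft : f t = M * t ^ (-lam) * δ := by
    rw [hδ, rpow_neg ht.le]
    field_simp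
  have hδ0 : 0 < δ := pos_of_mul_pos_right (hft ▸ hf_pos t ht) hMt.le
  have hδ1 : δ ≤ 1 := le_of_mul_le_mul_left (by rw [mul_one, ← hft]; exact hf_bound t ht) hMt
  calc ∫ s in Ioi 0, exp (-s) * f (t * s)
      ≤ (∫ s in Ioc 0 1, M * t ^ (-lam) * ((α * s) ^ (-lam) * δ ^ daviesExponent α s)) +
          ∫ s in Ioi 1, exp (-s) * f t := by
        refine setIntegral_Ioi_le_add_of_le zero_le_one
          (fun s hs => mul_nonneg (exp_pos _).le (hf_pos _ (mul_pos ht hs)).le)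
          ((integrableOn_rpow_neg_mul_rpow_daviesExponent hlam1 hα0.le hα1 hδ0.le hδ1).const_mul _)
          ((integrableOn_exp_neg_Ioi 1).mul_const _) (fun s hs => ?_) (fun s hs => ?_)
        · refine (mul_le_of_le_one_left (hf_pos _ (mul_pos ht hs.1)).le
            (exp_le_one_iff.mpr (by linarith [hs.1]))).trans ?_
          exact apply_mul_le_of_convexOn_log_of_le_rpow hf_pos hf_logconvex hf_bound hlam0.le ht
            hα0 hα1 hft hs.1 hs.2
        · have hs : (1 : ℝ) < s := hs
          exact mul_le_mul_of_nonneg_left (hf_anti ht (mul_pos ht (by linarith)) (by nlinarith))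
            (exp_pos _).le
    _ = M * t ^ (-lam) *
        ((∫ s in (0 : ℝ)..1, (α * s) ^ (-lam) * δ ^ (s * (1 - α) / (1 - α * s))) +
          Real.exp (-1) * δ) := by
        rw [integral_const_mul, integral_mul_const, integral_exp_neg_Ioi, hft,
          intervalIntegral.integral_of_le zero_le_one]
        unfold daviesExponent
        ring
end

section
/- Let 0 < α ≤ 1/2, 0 < λ < 1, and 0 < δ < 1, and for s ∈ (0,1) set p(s) := s(1-α)/(1-αs). Then ∫₀¹ (αs)^{-λ} δ^{p(s)} ds + e^{-1} δ < ( Γ(1-λ)/α + (1-λ)^{1-λ} e^{λ-2} ) · (log(1/δ))^{λ-1}, where Γ denotes the Gamma function. -/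
/-!
Write `L = log (1/δ)`. Since `δ < 1` and `p(s) ≥ αs` (this is where `α ≤ 1/2` enters), the
integrand is dominated by `h(αs)` with `h(u) = u^(-λ) δ^u = u^(-λ) e^(-Lu)`. Substituting `u = αs`,
the integral is at most `α⁻¹ ∫₀^α h`, which is strictly smaller than
`α⁻¹ ∫₀^∞ h = Γ(1-λ)/α · L^(λ-1)` because `h > 0` on `(α, ∞)`. For the second term,
`x ↦ x^c e^(-x)` is maximal at `x = c`, so with `c = 1 - λ` and `x = L` we get
`e⁻¹ δ = e⁻¹ L^(-c) · L^c e^(-L) ≤ c^c e^(-1-c) L^(-c)`.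
-/

open MeasureTheory Set Real

theorem rpow_mul_exp_neg_le {x c : ℝ} (hx : 0 ≤ x) (hc : 0 < c) :
    x ^ c * exp (-x) ≤ c ^ c * exp (-c) := by
  rcases hx.eq_or_lt with rfl | hx
  · rw [zero_rpow hc.ne', zero_mul]; positivity
  have hlog : c * log x - x ≤ c * log c - c := by
    have := mul_le_mul_of_nonneg_left (log_le_sub_one_of_pos (div_pos hx hc)) hc.le
    rw [log_div hx.ne' hc.ne', mul_sub, mul_sub, mul_div_cancel₀ _ hc.ne', mul_one] at this
    linarith
  rw [rpow_def_of_pos hx, rpow_def_of_pos hc, ← exp_add, ← exp_add]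
  exact exp_le_exp.2 (by linarith)

theorem intervalIntegral_lt_integral_Ioi {f : ℝ → ℝ} {a b : ℝ} (hf : IntegrableOn f (Ioi a))
    (hab : a ≤ b) (hpos : ∀ x ∈ Ioi b, 0 < f x) : ∫ x in a..b, f x < ∫ x in Ioi a, f x := by
  have htail : 0 < ∫ x in Ioi b, f x := by
    refine (setIntegral_pos_iff_support_of_nonneg_ae
      (ae_restrict_of_forall_mem measurableSet_Ioi fun x hx ↦ (hpos x hx).le)
      (hf.mono_set (Ioi_subset_Ioi hab))).2 ?_
    rw [inter_eq_right.2 (show Ioi b ⊆ Function.support f from fun x hx ↦ (hpos x hx).ne'),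
      Real.volume_Ioi]
    exact ENNReal.zero_lt_top
  linarith [intervalIntegral.integral_Ioi_sub_Ioi hf hab]

theorem log_one_div_pos {δ : ℝ} (hδ0 : 0 < δ) (hδ1 : δ < 1) : 0 < log (1 / δ) :=
  log_pos (one_lt_one_div hδ0 hδ1)

theorem rpow_eq_exp_neg_log_one_div_mul {δ : ℝ} (hδ : 0 < δ) (u : ℝ) :
    δ ^ u = exp (-(log (1 / δ) * u)) := by
  rw [rpow_def_of_pos hδ, one_div, log_inv, neg_mul, neg_neg]

theorem integrableOn_Ioi_rpow_neg_mul_rpow {lam δ : ℝ} (hlam : lam < 1) (hδ0 : 0 < δ)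
    (hδ1 : δ < 1) : IntegrableOn (fun u ↦ u ^ (-lam) * δ ^ u) (Ioi 0) := by
  refine (integrableOn_rpow_mul_exp_neg_mul_rpow (s := -lam) (by linarith) zero_lt_one
    (log_one_div_pos hδ0 hδ1)).congr_fun (fun u _ ↦ ?_) measurableSet_Ioi
  dsimp only
  rw [rpow_one, rpow_eq_exp_neg_log_one_div_mul hδ0, neg_mul]

theorem integral_Ioi_rpow_neg_mul_rpow {lam δ : ℝ} (hlam : lam < 1) (hδ0 : 0 < δ)
    (hδ1 : δ < 1) :
    ∫ u in Ioi 0, u ^ (-lam) * δ ^ u = Gamma (1 - lam) * log (1 / δ) ^ (lam - 1) := by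
  have hL := log_one_div_pos hδ0 hδ1
  have hexp : -lam = 1 - lam - 1 := by ring
  simp_rw [rpow_eq_exp_neg_log_one_div_mul hδ0, hexp]
  rw [integral_rpow_mul_exp_neg_mul_Ioi (by linarith) hL, one_div, inv_rpow hL.le,
    ← rpow_neg hL.le, neg_sub, mul_comm]

theorem mul_le_daviesExponent {α s : ℝ} (hα : α ≤ 1 / 2) (hs : 0 ≤ s) (hαs : α * s < 1) :
    α * s ≤ daviesExponent α s := by
  rw [daviesExponent, le_div_iff₀ (by linarith)]
  nlinarith [mul_nonneg hs (mul_nonneg (mul_self_nonneg α) hs)]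

theorem integral_rpow_mul_rpow_daviesExponent_lt {α lam δ : ℝ} (hα0 : 0 < α) (hα : α ≤ 1 / 2)
    (hlam : lam < 1) (hδ0 : 0 < δ) (hδ1 : δ < 1) :
    ∫ s in (0 : ℝ)..1, (α * s) ^ (-lam) * δ ^ daviesExponent α s <
      Gamma (1 - lam) / α * log (1 / δ) ^ (lam - 1) := by
  set h : ℝ → ℝ := fun u ↦ u ^ (-lam) * δ ^ u
  have hh : IntegrableOn h (Ioi 0) := integrableOn_Ioi_rpow_neg_mul_rpow hlam hδ0 hδ1
  have hh_comp : IntegrableOn (fun s ↦ h (α * s)) (Ioc 0 1) := by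
    have := ((intervalIntegrable_iff_integrableOn_Ioc_of_le hα0.le).2
      (hh.mono_set Ioc_subset_Ioi_self)).comp_mul_left (c := α)
    rwa [zero_div, div_self hα0.ne', intervalIntegrable_iff_integrableOn_Ioc_of_le zero_le_one]
      at this
  have hle : ∫ s in (0 : ℝ)..1, (α * s) ^ (-lam) * δ ^ daviesExponent α s ≤
      ∫ s in (0 : ℝ)..1, h (α * s) := by
    simp only [intervalIntegral.integral_of_le zero_le_one]
    refine integral_mono_of_nonneg
      (ae_restrict_of_forall_mem measurableSet_Ioc fun s hs ↦ ?_) hh_comp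
      (ae_restrict_of_forall_mem measurableSet_Ioc fun s hs ↦ ?_)
    · have := mul_pos hα0 hs.1
      positivity
    · have hαs : α * s < 1 := by nlinarith [hs.2]
      exact mul_le_mul_of_nonneg_left (rpow_le_rpow_of_exponent_ge hδ0 hδ1.le
        (mul_le_daviesExponent hα hs.1.le hαs)) (rpow_nonneg (by nlinarith [hs.1]) _)
  have hpos : ∀ u ∈ Ioi α, 0 < h u := fun u hu ↦
    mul_pos (rpow_pos_of_pos (hα0.trans hu) _) (rpow_pos_of_pos hδ0 _)
  calc _ ≤ ∫ s in (0 : ℝ)..1, h (α * s) := hle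
    _ = α⁻¹ * ∫ u in (0 : ℝ)..α, h u := by
      rw [intervalIntegral.integral_comp_mul_left _ hα0.ne', mul_zero, mul_one, smul_eq_mul]
    _ < α⁻¹ * ∫ u in Ioi 0, h u := by
      gcongr
      exact intervalIntegral_lt_integral_Ioi hh hα0.le hpos
    _ = Gamma (1 - lam) / α * log (1 / δ) ^ (lam - 1) := by
      rw [integral_Ioi_rpow_neg_mul_rpow hlam hδ0 hδ1]
      ring

theorem exp_neg_one_mul_le_rpow_log_one_div {lam δ : ℝ} (hlam : lam < 1) (hδ0 : 0 < δ)
    (hδ1 : δ < 1) :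
    exp (-1) * δ ≤ (1 - lam) ^ (1 - lam) * exp (lam - 2) * log (1 / δ) ^ (lam - 1) := by
  set L := log (1 / δ)
  have hL : 0 < L := log_one_div_pos hδ0 hδ1
  have hδ : δ = exp (-L) := by
    simpa only [rpow_one, mul_one] using rpow_eq_exp_neg_log_one_div_mul hδ0 1
  have hLL : L ^ (lam - 1) * L ^ (1 - lam) = 1 := by
    rw [← rpow_add hL, sub_add_sub_cancel', sub_self, rpow_zero]
  calc exp (-1) * δ = exp (-1) * L ^ (lam - 1) * (L ^ (1 - lam) * exp (-L)) := by
        rw [← hδ, mul_assoc (exp (-1)), ← mul_assoc (L ^ _), hLL, one_mul]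
    _ ≤ exp (-1) * L ^ (lam - 1) * ((1 - lam) ^ (1 - lam) * exp (-(1 - lam))) :=
        mul_le_mul_of_nonneg_left (rpow_mul_exp_neg_le hL.le (by linarith))
          (mul_nonneg (exp_pos _).le (rpow_nonneg hL.le _))
    _ = (1 - lam) ^ (1 - lam) * exp (lam - 2) * L ^ (lam - 1) := by
        rw [show lam - 2 = -1 + -(1 - lam) by ring, exp_add]
        ring

theorem davies_integral_estimate_general (α lam δ : ℝ)
    (hα0 : 0 < α) (hα : α ≤ 1 / 2)
    (hlam1 : lam < 1)
    (hδ0 : 0 < δ) (hδ1 : δ < 1) :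
    (∫ s in (0 : ℝ)..1, (α * s) ^ (-lam) * δ ^ (s * (1 - α) / (1 - α * s))) +
        Real.exp (-1) * δ <
      (Real.Gamma (1 - lam) / α + (1 - lam) ^ (1 - lam) * Real.exp (lam - 2)) *
        Real.log (1 / δ) ^ (lam - 1) := by
  rw [add_mul]
  exact add_lt_add_of_lt_of_le (integral_rpow_mul_rpow_daviesExponent_lt hα0 hα hlam1 hδ0 hδ1)
    (exp_neg_one_mul_le_rpow_log_one_div hlam1 hδ0 hδ1)

/-- Davies' estimate: for `0 < α ≤ 1/2`, `0 < λ < 1`, `0 < δ < 1` and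
`p(s) = s(1-α)/(1-αs)` one has
`∫₀¹ (αs)^(-λ) δ^(p s) ds + e⁻¹ δ < (Γ(1-λ)/α + (1-λ)^(1-λ) e^(λ-2)) (log(1/δ))^(λ-1)`. -/
theorem davies_integral_estimate (α lam δ : ℝ)
    (hα0 : 0 < α) (hα : α ≤ 1 / 2)
    (hlam0 : 0 < lam) (hlam1 : lam < 1)
    (hδ0 : 0 < δ) (hδ1 : δ < 1) :
    (∫ s in (0 : ℝ)..1, (α * s) ^ (-lam) * δ ^ (s * (1 - α) / (1 - α * s))) +
        Real.exp (-1) * δ <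
      (Real.Gamma (1 - lam) / α + (1 - lam) ^ (1 - lam) * Real.exp (lam - 2)) *
        Real.log (1 / δ) ^ (lam - 1) :=
  davies_integral_estimate_general α lam δ hα0 hα hlam1 hδ0 hδ1
end

section
/- Let λ ∈ (0,1), M > 0, and let f : (0,∞) → (0,∞) be non-increasing, log-convex, and satisfy f(τ) ≤ M τ^{-λ} for all τ > 0. Set C := 4·Γ(1-λ) + (1-λ)^{1-λ} e^{λ-2}. If t > 0 and E > 0 satisfy E ≤ ∫₀^∞ e^{-s} f(ts) ds, then f(t) ≥ M t^{-λ} · exp( - ( C·M·t^{-λ} / E )^{1/(1-λ)} ). -/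
/-!
Write `f t = M t^(-λ) e^(-L)`. For `s ≤ 1`, convexity of `log f` on the segment from `ts/4`
(where only the a priori bound is used) to `t` gives `f (ts) ≤ M t^(-λ) (s/4)^(-λ) e^(-3Ls/4)`,
the weight of `t` being at least `3s/4`; for `s ≥ 1` monotonicity gives `f (ts) ≤ f t`.
Against `e^(-s)`, the first bound integrates to at most `4 Γ(1-λ) M t^(-λ) L^(λ-1)`, and the
second to `M t^(-λ) e^(-L-1)`, which is at most `(1-λ)^(1-λ) e^(λ-2) M t^(-λ) L^(λ-1)` because
`x^c e^(-x)` is maximal at `x = c`. Hence `E ≤ C M t^(-λ) L^(λ-1)`, which is the claim.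
-/

open MeasureTheory Real Set

lemma exp_neg_le_rpow_mul_exp_neg_mul_rpow_neg {c x : ℝ} (hc : 0 < c) (hx : 0 < x) :
    exp (-x) ≤ c ^ c * exp (-c) * x ^ (-c) := by
  have hlog := log_le_sub_one_of_pos (div_pos hx hc)
  rw [log_div hx.ne' hc.ne', div_sub_one hc.ne', le_div_iff₀ hc] at hlog
  rw [rpow_def_of_pos hc, rpow_def_of_pos hx, ← exp_add, ← exp_add, exp_le_exp]
  nlinarith

lemma integrableOn_rpow_neg_mul_exp_neg_mul_Ioi {lam b : ℝ} (hlam : lam < 1) (hb : 0 < b) :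
    IntegrableOn (fun s : ℝ => s ^ (-lam) * exp (-(b * s))) (Ioi 0) := by
  simpa [neg_mul] using
    integrableOn_rpow_mul_exp_neg_mul_rpow (p := 1) (by linarith : -1 < -lam) one_pos hb

lemma integral_rpow_neg_mul_exp_neg_mul_Ioi {lam b : ℝ} (hlam : lam < 1) (hb : 0 < b) :
    ∫ s in Ioi 0, s ^ (-lam) * exp (-(b * s)) = b ^ (lam - 1) * Gamma (1 - lam) := by
  have h := integral_rpow_mul_exp_neg_mul_Ioi (sub_pos.2 hlam) hb
  rwa [sub_sub_cancel_left, one_div, inv_rpow hb.le, ← rpow_neg hb.le, neg_sub] at h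

section LogConvex

variable {f : ℝ → ℝ} {lam M t L : ℝ}

lemma le_rpow_mul_exp_of_convexOn_log
    (hf_pos : ∀ τ ∈ Ioi (0 : ℝ), 0 < f τ)
    (hf_logconvex : ConvexOn ℝ (Ioi 0) (fun τ => log (f τ)))
    (hf_bound : ∀ τ ∈ Ioi (0 : ℝ), f τ ≤ M * τ ^ (-lam))
    (hlam : 0 ≤ lam) (ht : 0 < t) (hL : 0 ≤ L) (hft : f t ≤ M * t ^ (-lam) * exp (-L))
    {s : ℝ} (hs0 : 0 < s) (hs1 : s ≤ 1) :
    f (t * s) ≤ M * t ^ (-lam) * 4 ^ lam * (s ^ (-lam) * exp (-(3 / 4 * L * s))) := by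
  have hM : 0 < M := pos_of_mul_pos_left ((hf_pos t ht).trans_le (hf_bound t ht))
    (rpow_pos_of_pos ht _).le
  have hts : t * s ∈ Ioi (0 : ℝ) := mul_pos ht hs0
  have hts4 : t * s / 4 ∈ Ioi (0 : ℝ) := div_pos (mul_pos ht hs0) four_pos
  have hlog_bound (τ : ℝ) (hτ : τ ∈ Ioi 0) : log (f τ) ≤ log M - lam * log τ := by
    have := log_le_log (hf_pos τ hτ) (hf_bound τ hτ)
    rwa [log_mul hM.ne' (rpow_pos_of_pos hτ _).ne', log_rpow hτ, neg_mul,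
      ← sub_eq_add_neg] at this
  have hlog_t : log (f t) ≤ log M - lam * log t - L := by
    have := log_le_log (hf_pos t ht) hft
    rwa [log_mul (by positivity) (exp_pos _).ne', log_mul hM.ne' (rpow_pos_of_pos ht _).ne',
      log_rpow ht, log_exp, neg_mul, ← sub_eq_add_neg, ← sub_eq_add_neg] at this
  have hlog_ts4 : log (f (t * s / 4)) ≤ log M - lam * (log t + log s - log 4) := by
    rw [← log_mul ht.ne' hs0.ne', ← log_div (mul_pos ht hs0).ne' four_ne_zero]
    exact hlog_bound _ hts4
  have hlog_s : log s - log 4 ≤ 0 := by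
    linarith [log_nonpos hs0.le hs1, log_pos (by norm_num : (1 : ℝ) < 4)]
  set p := 3 * s / (4 - s) with hp_def
  have h4s : 0 < 4 - s := by linarith
  have hp0 : 0 ≤ p := by positivity
  have hp1 : p ≤ 1 := by rw [div_le_one h4s]; linarith
  have hp : 3 / 4 * s ≤ p := by rw [le_div_iff₀ h4s]; nlinarith
  have hmid : (1 - p) * (t * s / 4) + p * t = t * s := by
    rw [hp_def]
    field_simp
    ring
  have hconv : log (f (t * s)) ≤ (1 - p) * log (f (t * s / 4)) + p * log (f t) := by
    have := hf_logconvex.2 hts4 ht (sub_nonneg.2 hp1) hp0 (sub_add_cancel 1 p)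
    simpa only [smul_eq_mul, hmid] using this
  calc f (t * s) = exp (log (f (t * s))) := (exp_log (hf_pos _ hts)).symm
    _ ≤ exp (log M + log t * -lam + log 4 * lam + (log s * -lam + -(3 / 4 * L * s))) := by
      rw [exp_le_exp]
      nlinarith [mul_le_mul_of_nonneg_left hlog_ts4 (sub_nonneg.2 hp1),
        mul_le_mul_of_nonneg_left hlog_t hp0, mul_le_mul_of_nonneg_right hp hL,
        mul_nonpos_of_nonneg_of_nonpos (mul_nonneg hp0 hlam) hlog_s]
    _ = M * t ^ (-lam) * 4 ^ lam * (s ^ (-lam) * exp (-(3 / 4 * L * s))) := by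
      rw [exp_add, exp_add, exp_add, exp_add, exp_log hM, ← rpow_def_of_pos ht,
        ← rpow_def_of_pos four_pos, ← rpow_def_of_pos hs0]

lemma setIntegral_Ioc_exp_neg_mul_le
    (hf_pos : ∀ τ ∈ Ioi (0 : ℝ), 0 < f τ)
    (hf_logconvex : ConvexOn ℝ (Ioi 0) (fun τ => log (f τ)))
    (hf_bound : ∀ τ ∈ Ioi (0 : ℝ), f τ ≤ M * τ ^ (-lam))
    (hlam0 : 0 ≤ lam) (hlam1 : lam < 1) (ht : 0 < t) (hL : 0 < L)
    (hft : f t ≤ M * t ^ (-lam) * exp (-L))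
    (hint : IntegrableOn (fun s => exp (-s) * f (t * s)) (Ioc 0 1)) :
    ∫ s in Ioc 0 1, exp (-s) * f (t * s)
      ≤ 4 * Gamma (1 - lam) * (M * t ^ (-lam)) * L ^ (lam - 1) := by
  set D := M * t ^ (-lam)
  have hD : 0 < D := pos_of_mul_pos_left ((hf_pos t ht).trans_le hft) (exp_pos _).le
  have hb : 0 < 3 / 4 * L := by positivity
  have hg : IntegrableOn (fun s => D * 4 ^ lam * (s ^ (-lam) * exp (-(3 / 4 * L * s)))) (Ioi 0) :=
    (integrableOn_rpow_neg_mul_exp_neg_mul_Ioi hlam1 hb).const_mul _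
  have hcoef : 4 ^ lam * (3 / 4 * L) ^ (lam - 1) ≤ 4 * L ^ (lam - 1) := by
    have h4 : (4 : ℝ) ^ lam / 4 ^ (lam - 1) = 4 := by
      rw [← rpow_sub four_pos, sub_sub_cancel, rpow_one]
    calc 4 ^ lam * (3 / 4 * L) ^ (lam - 1) = 4 ^ lam / 4 ^ (lam - 1) * (3 * L) ^ (lam - 1) := by
          rw [show 3 / 4 * L = 3 * L / 4 by ring, div_rpow (by positivity) four_pos.le]
          ring
      _ = 4 * (3 * L) ^ (lam - 1) := by rw [h4]
      _ ≤ 4 * L ^ (lam - 1) := by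
          gcongr 4 * ?_
          exact rpow_le_rpow_of_nonpos hL (by linarith) (by linarith)
  calc ∫ s in Ioc 0 1, exp (-s) * f (t * s)
      ≤ ∫ s in Ioc 0 1, D * 4 ^ lam * (s ^ (-lam) * exp (-(3 / 4 * L * s))) := by
        refine setIntegral_mono_on hint (hg.mono_set Ioc_subset_Ioi_self) measurableSet_Ioc
          fun s ⟨hs0, hs1⟩ => ?_
        refine (mul_le_of_le_one_left (hf_pos _ (mul_pos ht hs0)).le ?_).trans
          (le_rpow_mul_exp_of_convexOn_log hf_pos hf_logconvex hf_bound hlam0 ht hL.le hft hs0 hs1)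
        exact exp_le_one_iff.2 (neg_nonpos.2 hs0.le)
    _ ≤ ∫ s in Ioi 0, D * 4 ^ lam * (s ^ (-lam) * exp (-(3 / 4 * L * s))) := by
        refine setIntegral_mono_set hg ?_ Ioc_subset_Ioi_self.eventuallyLE
        filter_upwards [ae_restrict_mem measurableSet_Ioi] with s (hs : 0 < s)
        positivity
    _ = Gamma (1 - lam) * D * (4 ^ lam * (3 / 4 * L) ^ (lam - 1)) := by
        rw [integral_const_mul, integral_rpow_neg_mul_exp_neg_mul_Ioi hlam1 hb]
        ring
    _ ≤ Gamma (1 - lam) * D * (4 * L ^ (lam - 1)) := by gcongr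
    _ = 4 * Gamma (1 - lam) * D * L ^ (lam - 1) := by ring

lemma setIntegral_Ioi_one_exp_neg_mul_le
    (hf_pos : ∀ τ ∈ Ioi (0 : ℝ), 0 < f τ) (hf_anti : AntitoneOn f (Ioi 0))
    (hlam1 : lam < 1) (ht : 0 < t) (hL : 0 < L) (hft : f t ≤ M * t ^ (-lam) * exp (-L))
    (hint : IntegrableOn (fun s => exp (-s) * f (t * s)) (Ioi 1)) :
    ∫ s in Ioi 1, exp (-s) * f (t * s)
      ≤ (1 - lam) ^ (1 - lam) * exp (lam - 2) * (M * t ^ (-lam)) * L ^ (lam - 1) := by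
  set D := M * t ^ (-lam)
  have hD : 0 < D := pos_of_mul_pos_left ((hf_pos t ht).trans_le hft) (exp_pos _).le
  calc ∫ s in Ioi 1, exp (-s) * f (t * s) ≤ ∫ s in Ioi 1, D * exp (-L) * exp (-s) := by
        refine setIntegral_mono_on hint ((integrableOn_exp_neg_Ioi 1).const_mul _)
          measurableSet_Ioi fun s (hs : 1 < s) => ?_
        rw [mul_comm]
        gcongr
        have hts : t * s ∈ Ioi (0 : ℝ) := mul_pos ht (zero_lt_one.trans hs)
        exact (hf_anti ht hts (le_mul_of_one_le_right ht.le hs.le)).trans hft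
    _ = D * exp (-L) * exp (-1) := by rw [integral_const_mul, integral_exp_neg_Ioi]
    _ ≤ D * ((1 - lam) ^ (1 - lam) * exp (-(1 - lam)) * L ^ (-(1 - lam))) * exp (-1) := by
        gcongr
        exact exp_neg_le_rpow_mul_exp_neg_mul_rpow_neg (sub_pos.2 hlam1) hL
    _ = (1 - lam) ^ (1 - lam) * exp (lam - 2) * D * L ^ (lam - 1) := by
        rw [neg_sub, show lam - 2 = lam - 1 + -1 by ring, exp_add]
        ring

lemma integral_exp_neg_mul_le
    (hf_pos : ∀ τ ∈ Ioi (0 : ℝ), 0 < f τ) (hf_anti : AntitoneOn f (Ioi 0))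
    (hf_logconvex : ConvexOn ℝ (Ioi 0) (fun τ => log (f τ)))
    (hf_bound : ∀ τ ∈ Ioi (0 : ℝ), f τ ≤ M * τ ^ (-lam))
    (hlam0 : 0 ≤ lam) (hlam1 : lam < 1) (ht : 0 < t) (hL : 0 < L)
    (hft : f t ≤ M * t ^ (-lam) * exp (-L))
    (hint : IntegrableOn (fun s => exp (-s) * f (t * s)) (Ioi 0)) :
    ∫ s in Ioi 0, exp (-s) * f (t * s)
      ≤ (4 * Gamma (1 - lam) + (1 - lam) ^ (1 - lam) * exp (lam - 2)) * (M * t ^ (-lam))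
        * L ^ (lam - 1) := by
  have hsmall := setIntegral_Ioc_exp_neg_mul_le hf_pos hf_logconvex hf_bound hlam0 hlam1 ht hL hft
    (hint.mono_set Ioc_subset_Ioi_self)
  have hlarge := setIntegral_Ioi_one_exp_neg_mul_le hf_pos hf_anti hlam1 ht hL hft
    (hint.mono_set (Ioi_subset_Ioi zero_le_one))
  rw [← Ioc_union_Ioi_eq_Ioi zero_le_one, setIntegral_union (Ioc_disjoint_Ioi le_rfl)
    measurableSet_Ioi (hint.mono_set Ioc_subset_Ioi_self)
    (hint.mono_set (Ioi_subset_Ioi zero_le_one))]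
  linarith

end LogConvex

theorem heat_kernel_lower_bound_abstract_general (f : ℝ → ℝ) (lam M C : ℝ)
    (hlam0 : 0 < lam) (hlam1 : lam < 1)
    (hf_pos : ∀ τ ∈ Set.Ioi (0 : ℝ), 0 < f τ)
    (hf_anti : AntitoneOn f (Set.Ioi (0 : ℝ)))
    (hf_logconvex : ConvexOn ℝ (Set.Ioi (0 : ℝ)) (fun τ => Real.log (f τ)))
    (hf_bound : ∀ τ ∈ Set.Ioi (0 : ℝ), f τ ≤ M * τ ^ (-lam))
    (hC : C = 4 * Real.Gamma (1 - lam) + (1 - lam) ^ (1 - lam) * Real.exp (lam - 2))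
    (t E : ℝ) (ht : 0 < t) (hE : 0 < E)
    (hGreen : E ≤ ∫ s in Set.Ioi (0 : ℝ), Real.exp (-s) * f (t * s)) :
    f t ≥ M * t ^ (-lam) * Real.exp (-(C * M * t ^ (-lam) / E) ^ (1 / (1 - lam))) := by
  set D := M * t ^ (-lam)
  have hft : 0 < f t := hf_pos t ht
  have hD : 0 < D := hft.trans_le (hf_bound t ht)
  set L := log (D / f t)
  have hft_eq : f t = D * exp (-L) := by
    rw [exp_neg, exp_log (div_pos hD hft), inv_div, mul_div_cancel₀ _ hD.ne']
  have hL0 : 0 ≤ L := log_nonneg ((one_le_div hft).2 (hf_bound t ht))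
  have hC0 : 0 ≤ C := hC ▸ by have := Gamma_pos_of_pos (sub_pos.2 hlam1); positivity
  rw [ge_iff_le, hft_eq, mul_assoc C]
  suffices L ≤ (C * D / E) ^ (1 / (1 - lam)) by gcongr
  rcases hL0.eq_or_lt with hL | hL
  · rw [← hL]
    positivity
  have hint : IntegrableOn (fun s => exp (-s) * f (t * s)) (Ioi 0) :=
    Integrable.of_integral_ne_zero (hE.trans_le hGreen).ne'
  have hE_le : E ≤ C * D * L ^ (lam - 1) := hC ▸ hGreen.trans (integral_exp_neg_mul_le hf_pos
    hf_anti hf_logconvex hf_bound hlam0.le hlam1 ht hL hft_eq.le hint)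
  rw [one_div, le_rpow_inv_iff_of_pos hL0 (by positivity) (sub_pos.2 hlam1), le_div_iff₀ hE]
  calc L ^ (1 - lam) * E ≤ L ^ (1 - lam) * (C * D * L ^ (lam - 1)) := by gcongr
    _ = C * D := by rw [mul_comm, mul_assoc, ← rpow_add hL, sub_add_sub_cancel', sub_self,
      rpow_zero, mul_one]

/-- Abstract core of the paper's main theorem: if `f : (0,∞) → (0,∞)` is non-increasing,
log-convex and satisfies `f τ ≤ M τ^(-λ)`, and `E > 0` is a lower bound for the Green's
function `∫₀^∞ e^(-s) f(ts) ds`, then with `C = 4Γ(1-λ) + (1-λ)^(1-λ) e^(λ-2)` one has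
`f t ≥ M t^(-λ) exp(-(C M t^(-λ) / E)^(1/(1-λ)))`. -/
theorem heat_kernel_lower_bound_abstract (f : ℝ → ℝ) (lam M C : ℝ)
    (hlam0 : 0 < lam) (hlam1 : lam < 1) (hM : 0 < M)
    (hf_pos : ∀ τ ∈ Set.Ioi (0 : ℝ), 0 < f τ)
    (hf_anti : AntitoneOn f (Set.Ioi (0 : ℝ)))
    (hf_logconvex : ConvexOn ℝ (Set.Ioi (0 : ℝ)) (fun τ => Real.log (f τ)))
    (hf_bound : ∀ τ ∈ Set.Ioi (0 : ℝ), f τ ≤ M * τ ^ (-lam))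
    (hC : C = 4 * Real.Gamma (1 - lam) + (1 - lam) ^ (1 - lam) * Real.exp (lam - 2))
    (t E : ℝ) (ht : 0 < t) (hE : 0 < E)
    (hGreen : E ≤ ∫ s in Set.Ioi (0 : ℝ), Real.exp (-s) * f (t * s)) :
    f t ≥ M * t ^ (-lam) * Real.exp (-(C * M * t ^ (-lam) / E) ^ (1 / (1 - lam))) :=
  heat_kernel_lower_bound_abstract_general f lam M C hlam0 hlam1 hf_pos hf_anti hf_logconvex
    hf_bound hC t E ht hE hGreen
end
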